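/- Let k ≥ 2 and consider tuples (V, m, μ₁, μ₂, μ₃) where V is a 2k-dimensional 𝔽₂-vector space, m is a nondegenerate alternating bilinear form on V, and μ₁, μ₂, μ₃ are quadratic refinements of m such that each (V, m, μ_i), i = 1, 2, 3, is of plus type. Then there are exactly four isomorphism classes of such tuples: there exist four pairwise non-isomorphic such tuples with the property that every such tuple is isomorphic to one of them. -/

import Mathlib

noncomputable section

/-- `m` is a nondegenerate alternating bilinear form on the `𝔽₂`-vector space `V`. -/
def IsAltNondeg {V : Type} [AddCommGroup V] [Module (ZMod 2) V]
    (m : V → V → ZMod 2) : Prop :=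
  (∀ x y z, m (x + y) z = m x z + m y z) ∧
  (∀ x y z, m x (y + z) = m x y + m x z) ∧
  (∀ x, m x x = 0) ∧
  (∀ x, (∀ y, m x y = 0) → x = 0)

/-- `μ` is a quadratic refinement of `m`: `m(x,y) = μ(x) + μ(y) + μ(x+y)`. -/
def IsQuadRef {V : Type} [AddCommGroup V] [Module (ZMod 2) V]
    (m : V → V → ZMod 2) (μ : V → ZMod 2) : Prop :=
  ∀ x y, m x y = μ x + μ y + μ (x + y)

/-- `(V, m, μ)` is of plus type (the space `V_{0,k;0,0}`): there is a basis
`e₁, f₁, …, e_k, f_k` with `m(eᵢ,fⱼ) = δᵢⱼ`, `m(eᵢ,eⱼ) = m(fᵢ,fⱼ) = 0` and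
`μ(eᵢ) = μ(fᵢ) = 0`. -/
def IsPlusType {V : Type} [AddCommGroup V] [Module (ZMod 2) V] (k : ℕ)
    (m : V → V → ZMod 2) (μ : V → ZMod 2) : Prop :=
  ∃ B : Module.Basis (Fin k ⊕ Fin k) (ZMod 2) V,
    (∀ i j, m (B (Sum.inl i)) (B (Sum.inr j)) = if i = j then 1 else 0) ∧
    (∀ i j, m (B (Sum.inl i)) (B (Sum.inl j)) = 0) ∧
    (∀ i j, m (B (Sum.inr i)) (B (Sum.inr j)) = 0) ∧
    (∀ i, μ (B (Sum.inl i)) = 0) ∧ (∀ i, μ (B (Sum.inr i)) = 0)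

/-- Isomorphism of tuples `(V, m, μ₁, …, μ_s)`: a linear isomorphism preserving the
bilinear form and matching the quadratic refinements up to a permutation. -/
def TupleIso {s : ℕ} {V V' : Type} [AddCommGroup V] [Module (ZMod 2) V]
    [AddCommGroup V'] [Module (ZMod 2) V']
    (m : V → V → ZMod 2) (μs : Fin s → V → ZMod 2)
    (m' : V' → V' → ZMod 2) (μs' : Fin s → V' → ZMod 2) : Prop :=
  ∃ (f : V ≃ₗ[ZMod 2] V') (σ : Equiv.Perm (Fin s)),
    (∀ x y, m' (f x) (f y) = m x y) ∧ ∀ i x, μs' (σ i) (f x) = μs i x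

/-! Putting `μ₁` in normal form identifies `(V, m, μ₁)` with the hyperbolic space
`(HypSpace k, hypForm, hypQuad)`. Every other refinement is then `hypQuad + hypForm (v, ·)`, and
it is of plus type iff `v` is singular: the sign sum `∑ₓ (-1)^{μ x}` equals `2^k` for every form
of plus type, and completing the square multiplies it by `(-1)^{hypQuad v}`. So a triple amounts
to two singular vectors `v₂, v₃`, up to the orthogonal group and to permuting the refinements.
Transvections and Eichler transformations make the orthogonal group transitive on nonzero
singular vectors, on hyperbolic pairs, and on orthogonal pairs of distinct nonzero singular
vectors (some exist because `k ≥ 2`). This leaves four classes: all refinements equal, exactly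
two equal, and pairwise distinct with `hypForm v₂ v₃ = 0` or `1`; the last two are separated by
the sign sum of `μ₁ + μ₂ + μ₃ = hypQuad + hypForm (v₂ + v₃, ·)`, which is
`(-1)^{hypForm v₂ v₃} 2^k`. -/

open Function

lemma ZMod.eq_zero_or_eq_one_of_two (a : ZMod 2) : a = 0 ∨ a = 1 := by
  revert a; decide

lemma ZMod.mul_self_of_two (a : ZMod 2) : a * a = a := by
  revert a; decide

def sgn (a : ZMod 2) : ℤ := if a = 0 then 1 else -1

lemma sgn_add (a b : ZMod 2) : sgn (a + b) = sgn a * sgn b := by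
  revert a b; decide

lemma sgn_sum {ι : Type*} (s : Finset ι) (f : ι → ZMod 2) :
    sgn (∑ i ∈ s, f i) = ∏ i ∈ s, sgn (f i) := by
  classical
  induction s using Finset.induction_on with
  | empty => rfl
  | insert a s ha ih => rw [Finset.sum_insert ha, Finset.prod_insert ha, sgn_add, ih]

namespace IsAltNondeg

variable {V : Type} [AddCommGroup V] [Module (ZMod 2) V] {m : V → V → ZMod 2}

lemma add_left (hm : IsAltNondeg m) (x y z : V) : m (x + y) z = m x z + m y z := hm.1 x y z

lemma add_right (hm : IsAltNondeg m) (x y z : V) : m x (y + z) = m x y + m x z := hm.2.1 x y z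

lemma self_eq_zero (hm : IsAltNondeg m) (x : V) : m x x = 0 := hm.2.2.1 x

lemma eq_zero_of_forall (hm : IsAltNondeg m) {x : V} (h : ∀ y, m x y = 0) : x = 0 :=
  hm.2.2.2 x h

variable (hm : IsAltNondeg m)
include hm

lemma zero_left (y : V) : m 0 y = 0 := by
  simpa using hm.add_left 0 0 y

lemma zero_right (x : V) : m x 0 = 0 := by
  simpa using hm.add_right x 0 0

lemma symm (x y : V) : m x y = m y x := by
  have h := hm.self_eq_zero (x + y)
  rw [hm.add_left, hm.add_right, hm.add_right, hm.self_eq_zero, hm.self_eq_zero] at h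
  grind

lemma smul_left (a : ZMod 2) (x y : V) : m (a • x) y = a * m x y := by
  rcases a.eq_zero_or_eq_one_of_two with rfl | rfl <;> simp [hm.zero_left]

lemma smul_right (a : ZMod 2) (x y : V) : m x (a • y) = a * m x y := by
  rw [hm.symm, hm.smul_left, hm.symm]

lemma ne_zero_of_eq_one {u w : V} (h : m u w = 1) : u ≠ 0 := by
  rintro rfl
  rw [hm.zero_left] at h
  exact zero_ne_one h

lemma exists_eq_one {a : V} (ha : a ≠ 0) : ∃ x, m a x = 1 := by
  by_contra! h
  exact ha (hm.eq_zero_of_forall fun x => (m a x).eq_zero_or_eq_one_of_two.resolve_right (h x))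

lemma exists_eq_one_eq_zero {a b : V} (ha : a ≠ 0) (hab : a ≠ b) :
    ∃ x, m a x = 1 ∧ m b x = 0 := by
  obtain ⟨y, hy⟩ := hm.exists_eq_one ha
  obtain ⟨t, ht⟩ := hm.exists_eq_one (a := a + b) fun h => hab (by
    rwa [add_eq_zero_iff_eq_neg, ZModModule.neg_eq_self] at h)
  rw [hm.add_left] at ht
  rcases (m b y).eq_zero_or_eq_one_of_two with hby | hby
  · exact ⟨y, hy, hby⟩
  rcases (m b t).eq_zero_or_eq_one_of_two with hbt | hbt
  · exact ⟨t, by grind, hbt⟩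
  · refine ⟨y + t, ?_, ?_⟩ <;> rw [hm.add_right] <;> grind

lemma exists_eq_one_eq_zero_eq_zero {a b c : V} (ha : a ≠ 0) (hab : a ≠ b) (hac : a ≠ c)
    (habc : a ≠ b + c) : ∃ x, m a x = 1 ∧ m b x = 0 ∧ m c x = 0 := by
  obtain ⟨x, hax, hbx⟩ := hm.exists_eq_one_eq_zero ha hab
  obtain ⟨y, hacy, hby⟩ := hm.exists_eq_one_eq_zero (a := a + c) (b := b)
    (fun h => hac (by rwa [add_eq_zero_iff_eq_neg, ZModModule.neg_eq_self] at h))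
    (fun h => habc (by rw [← h, add_assoc, ZModModule.add_self, add_zero]))
  rw [hm.add_left] at hacy
  rcases (m c x).eq_zero_or_eq_one_of_two with hcx | hcx
  · exact ⟨x, hax, hbx, hcx⟩
  rcases (m c y).eq_zero_or_eq_one_of_two with hcy | hcy
  · exact ⟨y, by grind, hby, hcy⟩
  · refine ⟨x + y, ?_, ?_, ?_⟩ <;> rw [hm.add_right] <;> grind

end IsAltNondeg

namespace IsQuadRef

variable {V : Type} [AddCommGroup V] [Module (ZMod 2) V] {m : V → V → ZMod 2} {q : V → ZMod 2}

variable (hq : IsQuadRef m q)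
include hq

lemma map_add (x y : V) : q (x + y) = q x + q y + m x y := by
  grind [IsQuadRef]

lemma map_zero (hm : IsAltNondeg m) : q 0 = 0 := by
  have h := hq 0 0
  rw [hm.self_eq_zero, add_zero] at h
  grind

lemma map_smul (hm : IsAltNondeg m) (a : ZMod 2) (x : V) : q (a • x) = a * q x := by
  rcases a.eq_zero_or_eq_one_of_two with rfl | rfl <;> simp [hq.map_zero hm]

lemma map_add_smul (hm : IsAltNondeg m) (a : ZMod 2) (x y : V) :
    q (x + a • y) = q x + a * q y + a * m x y := by
  rw [hq.map_add, hq.map_smul hm, hm.smul_right]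

lemma add_form (hm : IsAltNondeg m) (v : V) : IsQuadRef m (fun x => q x + m v x) := by
  intro x y
  simp only [hm.add_right, hq x y]
  grind

end IsQuadRef

section Transport

variable {V W : Type} [AddCommGroup V] [Module (ZMod 2) V] [AddCommGroup W] [Module (ZMod 2) W]
  {m : V → V → ZMod 2} {q q' : V → ZMod 2}

lemma Module.Basis.additive_ext {n : ℕ} {ι M N : Type*} [AddCommGroup M] [Module (ZMod n) M]
    [AddCommGroup N] [Module (ZMod n) N] (B : Module.Basis ι (ZMod n) M) {f g : M → N}
    (hf : ∀ x y, f (x + y) = f x + f y) (hg : ∀ x y, g (x + y) = g x + g y)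
    (h : ∀ i, f (B i) = g (B i)) : f = g :=
  congrArg DFunLike.coe (B.ext (f₁ := (AddMonoidHom.mk' f hf).toZModLinearMap n)
    (f₂ := (AddMonoidHom.mk' g hg).toZModLinearMap n) h)

lemma IsAltNondeg.ext_basis {m' : V → V → ZMod 2} (hm : IsAltNondeg m) (hm' : IsAltNondeg m')
    {ι : Type*} (B : Module.Basis ι (ZMod 2) V) (h : ∀ i j, m (B i) (B j) = m' (B i) (B j)) :
    m = m' := by
  have hB : ∀ j, (fun x => m x (B j)) = fun x => m' x (B j) := fun j =>
    B.additive_ext (hm.add_left · · _) (hm'.add_left · · _) (h · j)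
  funext x
  exact B.additive_ext (hm.add_right x) (hm'.add_right x) fun j => congrFun (hB j) x

lemma IsQuadRef.add_map_add (hq : IsQuadRef m q) (hq' : IsQuadRef m q') (x y : V) :
    q (x + y) + q' (x + y) = (q x + q' x) + (q y + q' y) := by
  rw [hq.map_add, hq'.map_add]
  grind

lemma IsQuadRef.ext_basis (hq : IsQuadRef m q) (hq' : IsQuadRef m q') {ι : Type*}
    (B : Module.Basis ι (ZMod 2) V) (h : ∀ i, q (B i) = q' (B i)) : q = q' := by
  have hsum := B.additive_ext (f := fun x => q x + q' x) (g := fun _ => 0)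
    (hq.add_map_add hq') (fun _ _ => by simp) fun i => by simp [h, ZModModule.add_self]
  funext x
  have := congrFun hsum x
  grind

lemma IsAltNondeg.comap (hm : IsAltNondeg m) (f : W ≃ₗ[ZMod 2] V) :
    IsAltNondeg (fun x y => m (f x) (f y)) :=
  ⟨fun x y z => by simp [hm.add_left], fun x y z => by simp [hm.add_right],
    fun x => hm.self_eq_zero _,
    fun x h => f.map_eq_zero_iff.1 (hm.eq_zero_of_forall fun y => by simpa using h (f.symm y))⟩

lemma IsQuadRef.comap (hq : IsQuadRef m q) (f : W →ₗ[ZMod 2] V) :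
    IsQuadRef (fun x y => m (f x) (f y)) (q ∘ f) := fun x y => by
  simp [hq (f x) (f y)]

lemma IsPlusType.comap {k : ℕ} (h : IsPlusType k m q) (f : W ≃ₗ[ZMod 2] V) :
    IsPlusType k (fun x y => m (f x) (f y)) (q ∘ f) := by
  obtain ⟨B, h1, h2, h3, h4, h5⟩ := h
  exact ⟨B.map f.symm, by simpa using h1, by simpa using h2, by simpa using h3,
    by simpa using h4, by simpa using h5⟩

end Transport

section OrthogonalGroup

variable {V : Type} [AddCommGroup V] [Module (ZMod 2) V] {m : V → V → ZMod 2} {q : V → ZMod 2}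

def orthogonalGroup (q : V → ZMod 2) : Subgroup (V ≃ₗ[ZMod 2] V) where
  carrier := {g | ∀ x, q (g x) = q x}
  mul_mem' hg hh x := (hg _).trans (hh x)
  one_mem' _ := rfl
  inv_mem' {g} hg x := by simpa using (hg (g.symm x)).symm

lemma IsQuadRef.form_apply_of_mem (hq : IsQuadRef m q) {g : V ≃ₗ[ZMod 2] V}
    (hg : g ∈ orthogonalGroup q) (x y : V) : m (g x) (g y) = m x y := by
  rw [hq, hq x y, ← _root_.map_add g, hg, hg, hg]

namespace IsAltNondeg

variable (hm : IsAltNondeg m)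
include hm

def transvection (c : V) : V ≃ₗ[ZMod 2] V :=
  LinearEquiv.ofInvolutive
    ((AddMonoidHom.mk' (fun x => x + m x c • c) fun x y => by
      rw [hm.add_left, add_smul]; abel).toZModLinearMap 2)
    fun x => by
      change x + m x c • c + m (x + m x c • c) c • c = x
      rw [hm.add_left, hm.smul_left, hm.self_eq_zero, mul_zero, add_zero, add_assoc,
        ZModModule.add_self, add_zero]

lemma transvection_apply (c x : V) : hm.transvection c x = x + m x c • c := rfl

lemma quad_transvection (hq : IsQuadRef m q) (c x : V) :
    q (hm.transvection c x) = q x + m x c * (q c + 1) := by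
  rw [transvection_apply, hq.map_add_smul hm, ZMod.mul_self_of_two]
  ring

lemma form_transvection (c x y : V) :
    m (hm.transvection c x) (hm.transvection c y) = m x y := by
  simp only [transvection_apply, hm.add_left, hm.add_right, hm.smul_left, hm.smul_right,
    hm.self_eq_zero, hm.symm c y]
  grind

lemma transvection_mem (hq : IsQuadRef m q) {c : V} (hc : q c = 1) :
    hm.transvection c ∈ orthogonalGroup q := fun x => by
  rw [hm.quad_transvection hq, hc, show (1 + 1 : ZMod 2) = 0 from rfl, mul_zero, add_zero]

lemma transvection_apply_of_eq_zero {c x : V} (h : m x c = 0) : hm.transvection c x = x := by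
  rw [transvection_apply, h, zero_smul, add_zero]

lemma transvection_add_apply_left {u p : V} (h : m u p = 1) :
    hm.transvection (u + p) u = p := by
  rw [transvection_apply, hm.add_right, hm.self_eq_zero, h, zero_add, one_smul, ← add_assoc,
    ZModModule.add_self, zero_add]

def eichler (q : V → ZMod 2) {e s : V} (hes : m e s = 0) : V ≃ₗ[ZMod 2] V :=
  LinearEquiv.ofInvolutive
    ((AddMonoidHom.mk' (fun x => x + m x e • s + (m x s + q s * m x e) • e) fun x y => by
      simp only [hm.add_left, add_smul, mul_add]; abel).toZModLinearMap 2)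
    fun x => by
      simp only [AddMonoidHom.coe_toZModLinearMap, AddMonoidHom.mk'_apply, hm.add_left,
        hm.smul_left, hm.self_eq_zero, hm.symm s e, hes, mul_zero, add_zero]
      abel_nf
      simp [two_zsmul, ZModModule.add_self]

lemma eichler_apply (q : V → ZMod 2) {e s : V} (hes : m e s = 0) (x : V) :
    hm.eichler q hes x = x + m x e • s + (m x s + q s * m x e) • e := rfl

lemma eichler_mem (hq : IsQuadRef m q) {e s : V} (hes : m e s = 0) (he : q e = 0) :
    hm.eichler q hes ∈ orthogonalGroup q := fun x => by
  rw [eichler_apply, hq.map_add, hq.map_add_smul hm, hq.map_smul hm, he, hm.add_left,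
    hm.smul_left, hm.smul_right, hm.smul_right, hm.symm s e, hes]
  have := ZMod.mul_self_of_two (m x e)
  grind

end IsAltNondeg

end OrthogonalGroup

section Witt

variable {V : Type} [AddCommGroup V] [Module (ZMod 2) V] {m : V → V → ZMod 2} {q : V → ZMod 2}
  (hm : IsAltNondeg m) (hq : IsQuadRef m q)
include hm hq

lemma exists_orthogonal_map_of_form_eq_one {u p e : V} (hu : q u = 0) (hp : q p = 0)
    (hup : m u p = 1) (hue : m u e = 0) (hpe : m p e = 0) :
    ∃ g ∈ orthogonalGroup q, g u = p ∧ g e = e := by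
  refine ⟨hm.transvection (u + p), hm.transvection_mem hq ?_,
    hm.transvection_add_apply_left hup, hm.transvection_apply_of_eq_zero ?_⟩
  · rw [hq.map_add, hu, hp, hup, zero_add, zero_add]
  · rw [hm.add_right, hm.symm e u, hm.symm e p, hue, hpe, add_zero]

lemma exists_orthogonal_map_singular_fixing {u u' e : V} (hu : q u = 0) (hu' : q u' = 0)
    (hue : m u e = 0) (hu'e : m u' e = 0) (hu0 : u ≠ 0) (hu'0 : u' ≠ 0) (hne : u ≠ e)
    (hne' : u' ≠ e) : ∃ g ∈ orthogonalGroup q, g u = u' ∧ g e = e := by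
  by_cases heq : u = u'
  · exact ⟨1, one_mem _, heq, rfl⟩
  rcases (m u u').eq_zero_or_eq_one_of_two.symm with huu' | huu'
  · exact exists_orthogonal_map_of_form_eq_one hm hq hu hu' huu' hue hu'e
  obtain ⟨x, hux, hx, hex⟩ := hm.exists_eq_one_eq_zero_eq_zero (b := u + u') (c := e) hu0
    (by rwa [Ne, left_eq_add]) hne
    (by rwa [Ne, add_assoc, left_eq_add, add_eq_zero_iff_eq_neg, ZModModule.neg_eq_self])
  rw [hm.add_left, hux] at hx
  -- the detour `u ↦ p ↦ u'` through a singular `p` paired with both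
  set p := x + q x • u
  have hp : q p = 0 := by
    rw [hq.map_add_smul hm, hu, hm.symm, hux]
    grind
  have hup : m u p = 1 := by rw [hm.add_right, hm.smul_right, hm.self_eq_zero, hux]; simp
  have hpu' : m p u' = 1 := by
    rw [hm.add_left, hm.smul_left, huu', hm.symm]
    grind
  have hpe : m p e = 0 := by rw [hm.add_left, hm.smul_left, hue, hm.symm, hex]; simp
  obtain ⟨g₁, hg₁, h₁u, h₁e⟩ := exists_orthogonal_map_of_form_eq_one hm hq hu hp hup hue hpe
  obtain ⟨g₂, hg₂, h₂p, h₂e⟩ := exists_orthogonal_map_of_form_eq_one hm hq hp hu' hpu' hpe hu'e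
  exact ⟨g₂ * g₁, mul_mem hg₂ hg₁, by simp [h₁u, h₂p], by simp [h₁e, h₂e]⟩

lemma exists_orthogonal_map_singular {u u' : V} (hu : q u = 0) (hu' : q u' = 0) (hu0 : u ≠ 0)
    (hu'0 : u' ≠ 0) : ∃ g ∈ orthogonalGroup q, g u = u' := by
  obtain ⟨g, hg, hgu, -⟩ := exists_orthogonal_map_singular_fixing hm hq hu hu'
    (hm.zero_right u) (hm.zero_right u') hu0 hu'0 hu0 hu'0
  exact ⟨g, hg, hgu⟩

lemma exists_orthogonal_map_hyperbolic_pair {u w u' w' : V} (hu : q u = 0) (hw : q w = 0)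
    (hu' : q u' = 0) (hw' : q w' = 0) (huw : m u w = 1) (hu'w' : m u' w' = 1) :
    ∃ g ∈ orthogonalGroup q, g u = u' ∧ g w = w' := by
  obtain ⟨g, hg, hgu⟩ := exists_orthogonal_map_singular hm hq hu hu'
    (hm.ne_zero_of_eq_one huw) (hm.ne_zero_of_eq_one hu'w')
  have hgw : m u' (g w) = 1 := by rw [← hgu, hq.form_apply_of_mem hg, huw]
  have hs : m u' (w' + g w) = 0 := by rw [hm.add_right, hu'w', hgw]; rfl
  refine ⟨hm.eichler q hs * g, mul_mem (hm.eichler_mem hq hs hu') hg, ?_, ?_⟩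
  · rw [LinearEquiv.mul_apply, hgu, IsAltNondeg.eichler_apply, hm.self_eq_zero, hs]
    simp
  · have hcoef : m (g w) (w' + g w) + q (w' + g w) = 0 := by
      rw [hm.add_right, hq.map_add, hw', hg, hw, hm.self_eq_zero, hm.symm (g w)]
      grind
    rw [LinearEquiv.mul_apply, IsAltNondeg.eichler_apply, hm.symm _ u', hgw, one_smul, mul_one,
      hcoef, zero_smul, add_zero, add_left_comm, ZModModule.add_self, add_zero]

lemma exists_orthogonal_map_orthogonal_pair {u w u' w' : V} (hu : q u = 0) (hw : q w = 0)
    (hu' : q u' = 0) (hw' : q w' = 0) (huw : m u w = 0) (hu'w' : m u' w' = 0) (hu0 : u ≠ 0)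
    (hw0 : w ≠ 0) (hne : w ≠ u) (hu'0 : u' ≠ 0) (hw'0 : w' ≠ 0) (hne' : w' ≠ u') :
    ∃ g ∈ orthogonalGroup q, g u = u' ∧ g w = w' := by
  obtain ⟨g, hg, hgu⟩ := exists_orthogonal_map_singular hm hq hu hu' hu0 hu'0
  have hgwu' : m (g w) u' = 0 := by rw [← hgu, hq.form_apply_of_mem hg, hm.symm, huw]
  obtain ⟨h, hh, hhw, hhu'⟩ := exists_orthogonal_map_singular_fixing hm hq (u := g w)
    ((hg w).trans hw) hw' hgwu' (by rw [hm.symm, hu'w']) (by simpa using hw0) hw'0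
    (by rwa [← hgu, Ne, g.injective.eq_iff]) hne'
  exact ⟨h * g, mul_mem hh hg, by simp [hgu, hhu'], by simp [hhw]⟩

end Witt

section SignSum

def signSum {V : Type} [Fintype V] (q : V → ZMod 2) : ℤ := ∑ x, sgn (q x)

lemma signSum_comp_equiv {V W : Type} [Fintype V] [Fintype W] (q : V → ZMod 2) (f : W ≃ V) :
    signSum (q ∘ f) = signSum q :=
  Equiv.sum_comp f (fun x => sgn (q x))

variable {V : Type} [AddCommGroup V] [Module (ZMod 2) V] [Fintype V]
  {m : V → V → ZMod 2} {q : V → ZMod 2}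

/-- Completing the square: `q x + m v x = q v + q (x + v)`. -/
lemma signSum_add_form (hm : IsAltNondeg m) (hq : IsQuadRef m q) (v : V) :
    signSum (fun x => q x + m v x) = sgn (q v) * signSum q := by
  have h : ∀ x, q x + m v x = q v + q (x + v) := fun x => by
    rw [hq.map_add, hm.symm x]
    grind
  simp only [signSum, h, sgn_add, ← Finset.mul_sum]
  congr 1
  exact Equiv.sum_comp (Equiv.addRight v) (fun y => sgn (q y))

end SignSum

section HypSpace

abbrev HypSpace (k : ℕ) := Fin k ⊕ Fin k → ZMod 2

variable {k : ℕ}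

def hypForm (x y : HypSpace k) : ZMod 2 := ∑ i, (x (.inl i) * y (.inr i) + x (.inr i) * y (.inl i))

def hypQuad (x : HypSpace k) : ZMod 2 := ∑ i, x (.inl i) * x (.inr i)

lemma hypForm_single_right (x : HypSpace k) (j : Fin k ⊕ Fin k) :
    hypForm x (Pi.single j 1) = x j.swap := by
  cases j <;> simp [hypForm, Pi.single_apply]

lemma hypQuad_single (j : Fin k ⊕ Fin k) : hypQuad (Pi.single j (1 : ZMod 2)) = 0 := by
  cases j <;> simp [hypQuad, Pi.single_apply]

lemma isAltNondeg_hypForm : IsAltNondeg (hypForm (k := k)) := by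
  refine ⟨fun x y z => ?_, fun x y z => ?_, fun x => ?_, fun x h => ?_⟩
  · simp only [hypForm, Pi.add_apply, ← Finset.sum_add_distrib]
    exact Finset.sum_congr rfl fun i _ => by ring
  · simp only [hypForm, Pi.add_apply, ← Finset.sum_add_distrib]
    exact Finset.sum_congr rfl fun i _ => by ring
  · exact Finset.sum_eq_zero fun i _ => by rw [mul_comm]; exact CharTwo.add_self_eq_zero _
  · funext j
    simpa [hypForm_single_right] using h (Pi.single j.swap 1)

lemma isQuadRef_hypQuad : IsQuadRef hypForm (hypQuad (k := k)) := fun x y => by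
  simp only [hypForm, hypQuad, Pi.add_apply, ← Finset.sum_add_distrib]
  exact Finset.sum_congr rfl fun i _ => by grind

lemma isPlusType_hypQuad : IsPlusType k hypForm (hypQuad (k := k)) := by
  refine ⟨Pi.basisFun _ _, ?_, ?_, ?_, ?_, ?_⟩ <;>
    simp [hypForm_single_right, hypQuad_single, Pi.single_apply, eq_comm]

lemma signSum_hypQuad : signSum (hypQuad (k := k)) = 2 ^ k := by
  classical
  let e : (Fin k → ZMod 2 × ZMod 2) ≃ HypSpace k :=
    (Equiv.arrowProdEquivProdArrow _ _ _).trans (Equiv.sumArrowEquivProdArrow _ _ _).symm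
  rw [← signSum_comp_equiv _ e]
  calc ∑ c : Fin k → ZMod 2 × ZMod 2, sgn (hypQuad (e c))
      = ∑ c : Fin k → ZMod 2 × ZMod 2, ∏ i, sgn ((c i).1 * (c i).2) := by
        simp only [hypQuad, sgn_sum]; rfl
    _ = ∏ _i : Fin k, ∑ p : ZMod 2 × ZMod 2, sgn (p.1 * p.2) :=
        (Fintype.prod_sum fun (_ : Fin k) (p : ZMod 2 × ZMod 2) => sgn (p.1 * p.2)).symm
    _ = 2 ^ k := by simp only [show ∑ p : ZMod 2 × ZMod 2, sgn (p.1 * p.2) = 2 by decide,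
        Finset.prod_const, Finset.card_univ, Fintype.card_fin]

def hypE (i : Fin k) : HypSpace k := Pi.single (.inl i) 1

def hypF (i : Fin k) : HypSpace k := Pi.single (.inr i) 1

lemma hypE_ne_zero (i : Fin k) : hypE i ≠ 0 := by simp [hypE]

lemma hypF_ne_zero (i : Fin k) : hypF i ≠ 0 := by simp [hypF]

lemma hypE_ne_hypE {i j : Fin k} (hij : i ≠ j) : hypE i ≠ hypE j := fun h => by
  simpa [hypE, Pi.single_apply, hij] using congrFun h (.inl i)

lemma hypE_ne_hypF (i : Fin k) : hypE i ≠ hypF i := fun h => by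
  simpa [hypE, hypF] using congrFun h (.inl i)

lemma hypQuad_hypE (i : Fin k) : hypQuad (hypE i) = 0 := hypQuad_single _

lemma hypQuad_hypF (i : Fin k) : hypQuad (hypF i) = 0 := hypQuad_single _

lemma hypForm_hypE_hypE (i j : Fin k) : hypForm (hypE i) (hypE j) = 0 := by
  simp [hypE, hypForm_single_right]

lemma hypForm_hypE_hypF (i : Fin k) : hypForm (hypE i) (hypF i) = 1 := by
  simp [hypE, hypF, hypForm_single_right]

end HypSpace

section PlusType

variable {V : Type} [AddCommGroup V] [Module (ZMod 2) V] {m : V → V → ZMod 2} {q : V → ZMod 2}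
  {k : ℕ}

lemma IsPlusType.exists_equiv_hypSpace (hm : IsAltNondeg m) (hq : IsQuadRef m q)
    (hp : IsPlusType k m q) :
    ∃ f : V ≃ₗ[ZMod 2] HypSpace k, (fun x y => hypForm (f x) (f y)) = m ∧ hypQuad ∘ f = q := by
  obtain ⟨B, h1, h2, h3, h4, h5⟩ := hp
  have hB : ∀ j, B.equivFun (B j) = Pi.single j 1 := fun j => by
    ext; simp [Pi.single_apply, eq_comm]
  have hform : (fun x y => hypForm (B.equivFun x) (B.equivFun y)) = m := by
    refine (isAltNondeg_hypForm.comap B.equivFun).ext_basis hm B fun i j => ?_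
    rcases i with i | i <;> rcases j with j | j <;>
      simp [hB, hypForm_single_right, Pi.single_apply, h1, h2, h3, hm.symm (B (.inr i)), eq_comm]
  refine ⟨B.equivFun, hform, (hform ▸ isQuadRef_hypQuad.comap B.equivFun.toLinearMap).ext_basis
    hq B fun j => ?_⟩
  rcases j with j | j <;> simp [hB, hypQuad_single, h4, h5]

lemma IsPlusType.signSum_eq [Fintype V] (hm : IsAltNondeg m) (hq : IsQuadRef m q)
    (hp : IsPlusType k m q) : signSum q = 2 ^ k := by
  obtain ⟨f, -, rfl⟩ := hp.exists_equiv_hypSpace hm hq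
  exact (signSum_comp_equiv hypQuad f.toEquiv).trans signSum_hypQuad

lemma IsPlusType.add_form (hm : IsAltNondeg m) (hq : IsQuadRef m q) (hp : IsPlusType k m q)
    {v : V} (hv : q v = 0) : IsPlusType k m (fun x => q x + m v x) := by
  have hform : (fun x y => m (hm.transvection v x) (hm.transvection v y)) = m := by
    funext x y; exact hm.form_transvection v x y
  have hquad : q ∘ hm.transvection v = fun x => q x + m v x := by
    funext x; simp [hm.quad_transvection hq, hv, hm.symm x]
  have h := hp.comap (hm.transvection v)
  rwa [hform, hquad] at h

/-- The Arf invariant of `q + m v` differs from that of `q` by `q v`. -/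
lemma IsPlusType.eq_zero_of_add_form [Fintype V] (hm : IsAltNondeg m) (hq : IsQuadRef m q)
    (hp : IsPlusType k m q) {v : V} (hp' : IsPlusType k m (fun x => q x + m v x)) :
    q v = 0 := by
  have h := signSum_add_form hm hq v
  rw [hp'.signSum_eq hm (hq.add_form hm v), hp.signSum_eq hm hq] at h
  rcases (q v).eq_zero_or_eq_one_of_two with hv | hv
  · exact hv
  · rw [hv, show sgn 1 = -1 from rfl] at h
    have : (0 : ℤ) < 2 ^ k := by positivity
    linarith

lemma IsAltNondeg.add_form_injective (hm : IsAltNondeg m) :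
    Injective fun (v : V) x => q x + m v x := fun v w h => by
  have hvw : v + w = 0 := hm.eq_zero_of_forall fun x => by
    have hx : q x + m v x = q x + m w x := congrFun h x
    rw [hm.add_left, add_left_cancel hx, CharTwo.add_self_eq_zero]
  rwa [add_eq_zero_iff_eq_neg, ZModModule.neg_eq_self] at hvw

lemma exists_eq_hypQuad_add {k : ℕ} {μ : HypSpace k → ZMod 2} (hμ : IsQuadRef hypForm μ) :
    ∃ v, μ = fun x => hypQuad x + hypForm v x := by
  refine ⟨fun j => μ (Pi.single j.swap 1), hμ.ext_basis
    (isQuadRef_hypQuad.add_form isAltNondeg_hypForm _) (Pi.basisFun _ _) fun j => ?_⟩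
  simp [hypQuad_single, hypForm_single_right]

end PlusType

namespace TupleIso

variable {s : ℕ} {V V' V'' W : Type} [AddCommGroup V] [Module (ZMod 2) V] [AddCommGroup V']
  [Module (ZMod 2) V'] [AddCommGroup V''] [Module (ZMod 2) V''] [AddCommGroup W]
  [Module (ZMod 2) W] {m : V → V → ZMod 2} {μs : Fin s → V → ZMod 2} {m' : V' → V' → ZMod 2}
  {μs' : Fin s → V' → ZMod 2} {m'' : V'' → V'' → ZMod 2} {μs'' : Fin s → V'' → ZMod 2}

lemma symm (h : TupleIso m μs m' μs') : TupleIso m' μs' m μs := by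
  obtain ⟨f, σ, hf, hμ⟩ := h
  refine ⟨f.symm, σ⁻¹, fun x y => ?_, fun i x => ?_⟩
  · simpa using (hf (f.symm x) (f.symm y)).symm
  · simpa using (hμ (σ⁻¹ i) (f.symm x)).symm

lemma trans (h₁ : TupleIso m μs m' μs') (h₂ : TupleIso m' μs' m'' μs'') :
    TupleIso m μs m'' μs'' := by
  obtain ⟨f, σ, hf, hμ⟩ := h₁
  obtain ⟨g, τ, hg, hν⟩ := h₂
  exact ⟨f.trans g, τ * σ, fun x y => by simp [hg, hf], fun i x => by simp [hν, hμ]⟩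

lemma of_perm (m : V → V → ZMod 2) (μs : Fin s → V → ZMod 2) (σ : Equiv.Perm (Fin s)) :
    TupleIso m μs m (fun i => μs (σ i)) :=
  ⟨LinearEquiv.refl _ _, σ⁻¹, fun _ _ => rfl, fun i x => by simp⟩

lemma comap (f : W ≃ₗ[ZMod 2] V) (m : V → V → ZMod 2) (μs : Fin s → V → ZMod 2) :
    TupleIso (fun x y => m (f x) (f y)) (fun i => μs i ∘ f) m μs :=
  ⟨f, 1, fun _ _ => rfl, fun _ _ => rfl⟩

lemma of_mem_orthogonalGroup {q : V → ZMod 2} (hq : IsQuadRef m q) {g : V ≃ₗ[ZMod 2] V}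
    (hg : g ∈ orthogonalGroup q) (v : Fin s → V) :
    TupleIso m (fun i x => q x + m (v i) x) m (fun i x => q x + m (g (v i)) x) :=
  ⟨g, 1, hq.form_apply_of_mem hg, fun i x => by simp [hg x, hq.form_apply_of_mem hg]⟩

end TupleIso

section TupleClass

variable {V V' : Type} [AddCommGroup V] [Module (ZMod 2) V] [AddCommGroup V']
  [Module (ZMod 2) V'] [Fintype V] [Fintype V']

open Classical in
/-- `0 < signSum (∑ i, μs i)` says that the sum of the three refinements has Arf invariant `0`. -/
def tupleClass (μs : Fin 3 → V → ZMod 2) : Fin 4 :=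
  if ∀ i j, μs i = μs j then 0
  else if ¬ Injective μs then 1
  else if 0 < signSum (∑ i, μs i) then 2
  else 3

lemma TupleIso.tupleClass_eq {m : V → V → ZMod 2} {μs : Fin 3 → V → ZMod 2}
    {m' : V' → V' → ZMod 2} {μs' : Fin 3 → V' → ZMod 2} (h : TupleIso m μs m' μs') :
    tupleClass μs = tupleClass μs' := by
  obtain ⟨f, σ, -, hμ⟩ := h
  have hcomp : Injective fun g : V' → ZMod 2 => g ∘ f := f.surjective.injective_comp_right
  have key : μs = (fun g => g ∘ f) ∘ μs' ∘ σ := funext fun i => funext fun x => (hμ i x).symm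
  have hall : (∀ i j, μs i = μs j) ↔ ∀ i j, μs' i = μs' j := by
    simp only [key, Function.comp_apply, hcomp.eq_iff]
    exact ⟨fun h i j => by simpa using h (σ.symm i) (σ.symm j), fun h i j => h _ _⟩
  have hinj : Injective μs ↔ Injective μs' := by
    rw [key, hcomp.of_comp_iff, Equiv.injective_comp]
  have hsum : ∑ i, μs i = (∑ i, μs' i) ∘ f := by
    rw [key]
    funext x
    simp only [Finset.sum_apply, Function.comp_apply]
    exact Equiv.sum_comp σ (fun i => μs' i (f x))
  have hsign : signSum (∑ i, μs i) = signSum (∑ i, μs' i) := by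
    rw [hsum]
    exact signSum_comp_equiv _ f.toEquiv
  simp only [tupleClass, hall, hinj, hsign]

end TupleClass

section Classification

variable {V : Type} [AddCommGroup V] [Module (ZMod 2) V] {m : V → V → ZMod 2} {q : V → ZMod 2}
  {k : ℕ}

lemma sum_fin_three_add_form (hm : IsAltNondeg m) (v : Fin 3 → V) :
    ∑ t, (fun x => q x + m (v t) x) = fun x => q x + m (∑ t, v t) x := by
  funext x
  simp only [Finset.sum_apply, Fin.sum_univ_three, hm.add_left]
  grind

open Classical in
lemma tupleClass_add_form [Fintype V] (hm : IsAltNondeg m) (hq : IsQuadRef m q)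
    (hp : IsPlusType k m q) (v : Fin 3 → V) :
    tupleClass (fun t x => q x + m (v t) x) =
      if ∀ s t, v s = v t then 0 else if ¬ Injective v then 1
      else if q (∑ t, v t) = 0 then 2 else 3 := by
  have hinj : Injective fun w x => q x + m w x := hm.add_form_injective
  have hsign : 0 < signSum (∑ t, fun x => q x + m (v t) x) ↔ q (∑ t, v t) = 0 := by
    rw [sum_fin_three_add_form hm, signSum_add_form hm hq, hp.signSum_eq hm hq]
    rcases (q (∑ t, v t)).eq_zero_or_eq_one_of_two with h | h <;>
      simp [h, sgn]
  have hinjv : (Injective fun t x => q x + m (v t) x) ↔ Injective v := hinj.of_comp_iff v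
  simp only [tupleClass, hinj.eq_iff, hinjv, hsign]

lemma exists_perm_eq_or_injective {X : Type*} (μs : Fin 3 → X) :
    ∃ σ : Equiv.Perm (Fin 3), μs (σ 1) = μs (σ 0) ∨ Injective (μs ∘ σ) := by
  by_cases hinj : Injective μs
  · exact ⟨1, .inr hinj⟩
  obtain ⟨s, t, hst, hne⟩ := Function.not_injective_iff.1 hinj
  have : ∀ s t : Fin 3, s ≠ t → ∃ σ : Equiv.Perm (Fin 3), σ 0 = s ∧ σ 1 = t := by decide
  obtain ⟨σ, rfl, rfl⟩ := this s t hne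
  exact ⟨σ, .inl hst.symm⟩

lemma exists_hypSpace_normalForm (hm : IsAltNondeg m) {μs : Fin 3 → V → ZMod 2}
    (hμ : ∀ t, IsQuadRef m (μs t) ∧ IsPlusType k m (μs t)) :
    ∃ (f : V ≃ₗ[ZMod 2] HypSpace k) (v : Fin 3 → HypSpace k), v 0 = 0 ∧
      (∀ t, hypQuad (v t) = 0) ∧ (fun x y => hypForm (f x) (f y)) = m ∧
      ∀ t, μs t = fun x => hypQuad (f x) + hypForm (v t) (f x) := by
  obtain ⟨f, hf, hq0⟩ := (hμ 0).2.exists_equiv_hypSpace hm (hμ 0).1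
  have hform : (fun x y => m (f.symm x) (f.symm y)) = hypForm := by
    simp [← hf]
  have hμ' : ∀ t, IsQuadRef hypForm (μs t ∘ f.symm) ∧ IsPlusType k hypForm (μs t ∘ f.symm) :=
    fun t => hform ▸ ⟨(hμ t).1.comap f.symm.toLinearMap, (hμ t).2.comap f.symm⟩
  choose v hv using fun t => exists_eq_hypQuad_add (hμ' t).1
  have hμv : ∀ t, μs t = fun x => hypQuad (f x) + hypForm (v t) (f x) := fun t => by
    funext x; simpa using congrFun (hv t) (f x)
  refine ⟨f, v, ?_, fun t => ?_, hf, hμv⟩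
  · refine isAltNondeg_hypForm.add_form_injective (q := hypQuad) ((hv 0).symm.trans ?_)
    funext x
    simp [← hq0, isAltNondeg_hypForm.zero_left]
  · exact isPlusType_hypQuad.eq_zero_of_add_form isAltNondeg_hypForm isQuadRef_hypQuad
      (hv t ▸ (hμ' t).2)

end Classification

section Models

variable {V : Type} [AddCommGroup V] [Module (ZMod 2) V] {m : V → V → ZMod 2} {k : ℕ}
  (i j : Fin k)

def modelVectors : Fin 4 → Fin 3 → HypSpace k :=
  ![![0, 0, 0], ![0, 0, hypE i], ![0, hypE i, hypE j], ![0, hypE i, hypF i]]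

def model (a : Fin 4) (t : Fin 3) (x : HypSpace k) : ZMod 2 :=
  hypQuad x + hypForm (modelVectors i j a t) x

lemma hypQuad_modelVectors (a : Fin 4) (t : Fin 3) : hypQuad (modelVectors i j a t) = 0 := by
  fin_cases a <;> fin_cases t <;>
    simp [modelVectors, hypE, hypF, hypQuad_single, isQuadRef_hypQuad.map_zero isAltNondeg_hypForm]

lemma isPlusType_model (a : Fin 4) (t : Fin 3) : IsPlusType k hypForm (model i j a t) :=
  isPlusType_hypQuad.add_form isAltNondeg_hypForm isQuadRef_hypQuad (hypQuad_modelVectors i j a t)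

lemma tupleClass_model (hij : i ≠ j) (a : Fin 4) : tupleClass (model i j a) = a := by
  change tupleClass (fun t x => hypQuad x + hypForm (modelVectors i j a t) x) = a
  rw [tupleClass_add_form isAltNondeg_hypForm isQuadRef_hypQuad isPlusType_hypQuad]
  fin_cases a <;>
    simp [modelVectors, Fin.forall_fin_succ, Injective, Fin.sum_univ_three, hypE_ne_zero,
      hypF_ne_zero, hypE_ne_hypE hij, hypE_ne_hypF, isQuadRef_hypQuad.map_add, hypQuad_hypE,
      hypQuad_hypF, hypForm_hypE_hypE, hypForm_hypE_hypF, eq_comm]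

lemma exists_orthogonal_apply_eq_modelVectors (hij : i ≠ j) (v : Fin 3 → HypSpace k)
    (hv0 : v 0 = 0) (hq : ∀ t, hypQuad (v t) = 0) (hv : v 1 = v 0 ∨ Injective v) :
    ∃ a, ∃ g ∈ orthogonalGroup hypQuad, ∀ t, g (v t) = modelVectors i j a t := by
  have hm := isAltNondeg_hypForm (k := k)
  have hq₀ := isQuadRef_hypQuad (k := k)
  rcases hv with hv1 | hinj
  · rw [hv0] at hv1
    by_cases hv2 : v 2 = 0
    · refine ⟨0, 1, one_mem _, fun t => ?_⟩
      fin_cases t <;> simp [modelVectors, hv0, hv1, hv2]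
    · obtain ⟨g, hg, hgv⟩ :=
        exists_orthogonal_map_singular hm hq₀ (hq 2) (hypQuad_hypE i) hv2 (hypE_ne_zero i)
      refine ⟨1, g, hg, fun t => ?_⟩
      fin_cases t <;> simp [modelVectors, hv0, hv1, hgv]
  have hv1 : v 1 ≠ 0 := hv0 ▸ hinj.ne (by decide)
  have hv2 : v 2 ≠ 0 := hv0 ▸ hinj.ne (by decide)
  have hv12 : v 2 ≠ v 1 := hinj.ne (by decide)
  rcases (hypForm (v 1) (v 2)).eq_zero_or_eq_one_of_two with h | h
  · obtain ⟨g, hg, hg1, hg2⟩ := exists_orthogonal_map_orthogonal_pair hm hq₀ (hq 1) (hq 2)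
      (hypQuad_hypE i) (hypQuad_hypE j) h (hypForm_hypE_hypE i j) hv1 hv2 hv12 (hypE_ne_zero i)
      (hypE_ne_zero j) (hypE_ne_hypE hij).symm
    refine ⟨2, g, hg, fun t => ?_⟩
    fin_cases t <;> simp [modelVectors, hv0, hg1, hg2]
  · obtain ⟨g, hg, hg1, hg2⟩ := exists_orthogonal_map_hyperbolic_pair hm hq₀ (hq 1) (hq 2)
      (hypQuad_hypE i) (hypQuad_hypF i) h (hypForm_hypE_hypF i)
    refine ⟨3, g, hg, fun t => ?_⟩
    fin_cases t <;> simp [modelVectors, hv0, hg1, hg2]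

lemma exists_tupleIso_model (hij : i ≠ j) (hm : IsAltNondeg m) {μs : Fin 3 → V → ZMod 2}
    (hμ : ∀ t, IsQuadRef m (μs t) ∧ IsPlusType k m (μs t)) :
    ∃ a, TupleIso m μs hypForm (model i j a) := by
  obtain ⟨σ, hσ⟩ := exists_perm_eq_or_injective μs
  obtain ⟨f, v, hv0, hvq, hf, hμv⟩ := exists_hypSpace_normalForm hm fun t => hμ (σ t)
  have hcomp : Injective fun g : HypSpace k → ZMod 2 => g ∘ f := f.surjective.injective_comp_right
  have hinj : Injective fun (w : HypSpace k) x => hypQuad x + hypForm w x :=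
    isAltNondeg_hypForm.add_form_injective
  have key : μs ∘ σ = (fun g => g ∘ f) ∘ (fun w x => hypQuad x + hypForm w x) ∘ v := funext hμv
  have hv : v 1 = v 0 ∨ Injective v := by
    rw [key, hcomp.of_comp_iff, hinj.of_comp_iff] at hσ
    exact hσ.imp_left fun h => hinj (hcomp (by rw [hμv, hμv] at h; exact h))
  obtain ⟨a, g, hg, hgv⟩ := exists_orthogonal_apply_eq_modelVectors i j hij v hv0 hvq hv
  have h₁ : TupleIso m (fun t => μs (σ t)) hypForm (fun t x => hypQuad x + hypForm (v t) x) :=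
    ⟨f, 1, fun x y => congrFun (congrFun hf x) y, fun t x => by simp [hμv]⟩
  have h₂ := TupleIso.of_mem_orthogonalGroup isQuadRef_hypQuad hg v
  simp only [hgv] at h₂
  exact ⟨a, (TupleIso.of_perm m μs σ).trans (h₁.trans h₂)⟩

end Models

/-- For `k ≥ 2` there are exactly four isomorphism classes of tuples
`(V, m, μ₁, μ₂, μ₃)` with `V` of dimension `2k` over `𝔽₂`, `m` nondegenerate alternating,
and `μ₁, μ₂, μ₃` quadratic refinements of plus type: there are four pairwise
non-isomorphic such tuples such that every such tuple is isomorphic to one of them. -/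
theorem four_classes_of_triples (k : ℕ) (hk : 2 ≤ k) :
    ∃ (M : Fin 4 → ((Fin (2 * k) → ZMod 2) → (Fin (2 * k) → ZMod 2) → ZMod 2))
      (Mu : Fin 4 → Fin 3 → (Fin (2 * k) → ZMod 2) → ZMod 2),
      (∀ a : Fin 4, IsAltNondeg (M a) ∧
        ∀ i : Fin 3, IsQuadRef (M a) (Mu a i) ∧ IsPlusType k (M a) (Mu a i)) ∧
      (∀ a b : Fin 4, a ≠ b → ¬ TupleIso (M a) (Mu a) (M b) (Mu b)) ∧
      (∀ (V : Type) [AddCommGroup V] [Module (ZMod 2) V]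
          (m : V → V → ZMod 2) (μs : Fin 3 → V → ZMod 2),
        Module.finrank (ZMod 2) V = 2 * k →
        IsAltNondeg m →
        (∀ i : Fin 3, IsQuadRef m (μs i) ∧ IsPlusType k m (μs i)) →
        ∃ a : Fin 4, TupleIso m μs (M a) (Mu a)) := by
  let i : Fin k := ⟨0, by omega⟩
  let j : Fin k := ⟨1, by omega⟩
  have hij : i ≠ j := by simp [i, j, Fin.ext_iff]
  let L : (Fin (2 * k) → ZMod 2) ≃ₗ[ZMod 2] HypSpace k :=
    LinearEquiv.funCongrLeft _ _ (finSumFinEquiv.trans (finCongr (two_mul k).symm))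
  have hL : ∀ a, TupleIso (fun x y => hypForm (L x) (L y)) (fun t => model i j a t ∘ L)
      hypForm (model i j a) := fun a => TupleIso.comap L _ _
  refine ⟨fun _ x y => hypForm (L x) (L y), fun a t => model i j a t ∘ L,
    fun a => ⟨?_, fun t => ⟨?_, ?_⟩⟩, fun a b hab h => hab ?_, fun V _ _ m μs _ hm hμ => ?_⟩
  · exact isAltNondeg_hypForm.comap L
  · exact (isQuadRef_hypQuad.add_form isAltNondeg_hypForm _).comap L.toLinearMap
  · exact (isPlusType_model i j a t).comap L
  · rw [← tupleClass_model i j hij a, ← tupleClass_model i j hij b, ← (hL a).tupleClass_eq,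
      h.tupleClass_eq, (hL b).tupleClass_eq]
  · obtain ⟨a, h⟩ := exists_tupleIso_model i j hij hm hμ
    exact ⟨a, h.trans (hL a).symm⟩
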